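/- (Lemma 2, orthogonality) For every σ > 0 and all natural numbers n and m, the functions G_n(x) = He_n(φ_σ(x)) are orthogonal with respect to the weight f_IG(x|σ,σ)·(1+x)/2 on (0,∞): ∫₀^∞ He_n(φ_σ(x)) · He_m(φ_σ(x)) · f_IG(x|σ,σ) · ((1+x)/2) dx equals n! if n = m and equals 0 if n ≠ m. -/

import Mathlib

open MeasureTheory Real Set

/-- Inverse Gaussian density `f_IG(x | γ, δ)`. -/
noncomputable def fIG (γ δ x : ℝ) : ℝ :=
  δ / Real.sqrt (2 * Real.pi * x ^ 3) * Real.exp (-(γ * x - δ) ^ 2 / (2 * x))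

/-- The map `φ_σ(x) = σ (√x − 1/√x)`. -/
noncomputable def phiMap (σ x : ℝ) : ℝ := σ * (Real.sqrt x - 1 / Real.sqrt x)

/-- The inverse map `φ_σ⁻¹(z) = 1 + z²/(2σ²) + (z/σ)√(1 + z²/(4σ²))`. -/
noncomputable def phiInv (σ z : ℝ) : ℝ :=
  1 + z ^ 2 / (2 * σ ^ 2) + z / σ * Real.sqrt (1 + z ^ 2 / (4 * σ ^ 2))

/-- Standard normal density `φ(z) = exp(−z²/2)/√(2π)`. -/
noncomputable def stdNormalPdf (z : ℝ) : ℝ := Real.exp (-z ^ 2 / 2) / Real.sqrt (2 * Real.pi)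

/-- Standard normal cumulative distribution function. -/
noncomputable def stdNormalCDF (z : ℝ) : ℝ := ∫ t in Set.Iic z, stdNormalPdf t

/-- Modified Bessel function of the second kind `K_p(z)` (integral representation). -/
noncomputable def besselK (p z : ℝ) : ℝ :=
  (1 / 2) * ∫ t in Set.Ioi (0 : ℝ), t ^ (p - 1) * Real.exp (-z * (t + 1 / t) / 2)

/-- Generalized inverse Gaussian density `f_GIG(x | γ, δ, p)`. -/
noncomputable def fGIG (γ δ p x : ℝ) : ℝ :=
  (γ / δ) ^ p * x ^ (p - 1) / (2 * besselK p (γ * δ)) *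
    Real.exp (-(γ ^ 2 * x + δ ^ 2 / x) / 2)

/-- Generalized hyperbolic density `f_GH(y | μ, β, γ, δ, p)` with `α = √(β² + γ²)`. -/
noncomputable def fGH (μ β γ δ p y : ℝ) : ℝ :=
  Real.sqrt (Real.sqrt (β ^ 2 + γ ^ 2)) *
      (γ / (Real.sqrt (β ^ 2 + γ ^ 2) * δ)) ^ p /
      (Real.sqrt (2 * Real.pi) * besselK p (δ * γ)) *
    Real.exp (β * (y - μ)) *
    besselK (p - 1 / 2) (Real.sqrt (β ^ 2 + γ ^ 2) * Real.sqrt (δ ^ 2 + (y - μ) ^ 2)) /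
    (δ ^ 2 + (y - μ) ^ 2) ^ ((1 - 2 * p) / 4)

/-!
The substitution `z = φ_σ(x)` maps `(0, ∞)` increasingly onto `ℝ`, with
`φ_σ'(x) = σ(1 + x)/(2x√x)` and `f_IG(x|σ,σ)(1 + x)/2 = φ_σ'(x) · φ(φ_σ(x))`, so the integral is
the Gaussian one `∫ He_n He_m φ`. Since `(He_n φ)' = -He_{n+1} φ`, integrating by parts `n` times
gives `∫ p He_n φ = ∫ p⁽ⁿ⁾ φ` for every polynomial `p`; for `p = He_m` with `m ≤ n` the
derivative `He_m⁽ⁿ⁾` is `n!` if `m = n` and `0` otherwise.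
-/

open Polynomial ProbabilityTheory
open scoped Nat

theorem Polynomial.Monic.iterate_derivative_natDegree {R : Type*} [Semiring R] {p : R[X]}
    (hp : p.Monic) : derivative^[p.natDegree] p = (p.natDegree ! : R[X]) := by
  have hdeg : (derivative^[p.natDegree] p).natDegree = 0 := by
    simpa using natDegree_iterate_derivative p p.natDegree
  rw [eq_C_of_natDegree_eq_zero hdeg, coeff_iterate_derivative, zero_add,
    Nat.descFactorial_self, hp.coeff_natDegree, nsmul_one, map_natCast]

theorem hasDerivAt_stdNormalPdf (x : ℝ) : HasDerivAt stdNormalPdf (-x * stdNormalPdf x) x := by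
  have h : HasDerivAt (fun y : ℝ => -y ^ 2 / 2) (-x) x := by
    refine ((hasDerivAt_pow 2 x).fun_neg.div_const 2).congr_deriv ?_
    ring
  refine (h.exp.div_const (√(2 * π))).congr_deriv ?_
  simp only [stdNormalPdf]
  ring

theorem stdNormalPdf_eq_gaussianPDFReal : stdNormalPdf = gaussianPDFReal 0 1 := by
  ext x
  simp [stdNormalPdf, gaussianPDFReal, div_eq_inv_mul]

theorem integral_stdNormalPdf : ∫ x, stdNormalPdf x = 1 := by
  rw [stdNormalPdf_eq_gaussianPDFReal]
  exact integral_gaussianPDFReal_eq_one 0 one_ne_zero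

theorem integrable_pow_mul_stdNormalPdf (k : ℕ) :
    Integrable fun x : ℝ => x ^ k * stdNormalPdf x := by
  have h := integrable_rpow_mul_exp_neg_mul_sq (b := 1 / 2) (by norm_num)
    (s := k) (by linarith [(Nat.cast_nonneg k : (0 : ℝ) ≤ k)])
  simp only [rpow_natCast] at h
  convert h.div_const (√(2 * π)) using 2 with x
  rw [stdNormalPdf, mul_div_assoc]
  congr 3
  ring

theorem integrable_eval_mul_stdNormalPdf (p : ℝ[X]) :
    Integrable fun x => p.eval x * stdNormalPdf x := by
  simp only [eval_eq_sum_range, Finset.sum_mul, mul_assoc]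
  exact integrable_finsetSum _ fun i _ => (integrable_pow_mul_stdNormalPdf i).const_mul _

theorem integrable_eval_mul_hermite_mul_stdNormalPdf (p : ℝ[X]) (n : ℕ) :
    Integrable fun x => p.eval x * aeval x (hermite n) * stdNormalPdf x := by
  simpa only [← eval_map_algebraMap, ← eval_mul] using
    integrable_eval_mul_stdNormalPdf (p * (hermite n).map (algebraMap ℤ ℝ))

theorem hasDerivAt_hermite_mul_stdNormalPdf (n : ℕ) (x : ℝ) :
    HasDerivAt (fun x => aeval x (hermite n) * stdNormalPdf x)
      (-(aeval x (hermite (n + 1)) * stdNormalPdf x)) x := by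
  refine (((hermite n).hasDerivAt_aeval x).mul (hasDerivAt_stdNormalPdf x)).congr_deriv ?_
  rw [hermite_succ, map_sub, map_mul, aeval_X]
  ring

theorem integral_eval_mul_hermite_succ_mul_stdNormalPdf (p : ℝ[X]) (n : ℕ) :
    ∫ x, p.eval x * aeval x (hermite (n + 1)) * stdNormalPdf x =
      ∫ x, (derivative p).eval x * aeval x (hermite n) * stdNormalPdf x := by
  have hparts := integral_mul_deriv_eq_deriv_mul_of_integrable
    (fun x _ => p.hasDerivAt x) (fun x _ => hasDerivAt_hermite_mul_stdNormalPdf n x)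
    (by simpa only [Pi.mul_def, Pi.neg_def, mul_neg, ← mul_assoc] using
      (integrable_eval_mul_hermite_mul_stdNormalPdf p (n + 1)).neg)
    (by simpa only [Pi.mul_def, ← mul_assoc] using
      integrable_eval_mul_hermite_mul_stdNormalPdf (derivative p) n)
    (by simpa only [Pi.mul_def, ← mul_assoc] using
      integrable_eval_mul_hermite_mul_stdNormalPdf p n)
  simp only [mul_neg, integral_neg, neg_inj, ← mul_assoc] at hparts
  exact hparts

theorem integral_eval_mul_hermite_mul_stdNormalPdf (p : ℝ[X]) (n : ℕ) :
    ∫ x, p.eval x * aeval x (hermite n) * stdNormalPdf x =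
      ∫ x, (derivative^[n] p).eval x * stdNormalPdf x := by
  induction n generalizing p with
  | zero => simp
  | succ n ih =>
    rw [integral_eval_mul_hermite_succ_mul_stdNormalPdf, ih, Function.iterate_succ_apply]

theorem integral_hermite_mul_hermite_mul_stdNormalPdf (n m : ℕ) :
    ∫ x, aeval x (hermite n) * aeval x (hermite m) * stdNormalPdf x =
      if n = m then (n ! : ℝ) else 0 := by
  wlog hmn : m ≤ n generalizing n m
  · have hne : n ≠ m := by omega
    simpa only [mul_comm (aeval _ (hermite m)), if_neg hne, if_neg hne.symm] using
      this m n (by omega)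
  have hHe : ∀ x : ℝ, aeval x (hermite m) = ((hermite m).map (algebraMap ℤ ℝ)).eval x :=
    fun x => (eval_map_algebraMap _ _).symm
  simp only [hHe, mul_comm (aeval _ (hermite n)), integral_eval_mul_hermite_mul_stdNormalPdf]
  have hdeg : ((hermite m).map (algebraMap ℤ ℝ)).natDegree = m := by
    rw [(hermite_monic m).natDegree_map, natDegree_hermite]
  rcases hmn.eq_or_lt with rfl | hlt
  · have h := ((hermite_monic m).map (algebraMap ℤ ℝ)).iterate_derivative_natDegree
    rw [hdeg] at h
    simp only [h, eval_natCast, integral_const_mul, integral_stdNormalPdf]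
    simp
  · rw [iterate_derivative_eq_zero (hdeg.trans_lt hlt)]
    simp [hlt.ne']

theorem phiMap_strictMonoOn {σ : ℝ} (hσ : 0 < σ) : StrictMonoOn (phiMap σ) (Ioi 0) := by
  intro x hx y _ hxy
  have hsqrt : √x < √y := sqrt_lt_sqrt (le_of_lt hx) hxy
  have hinv : 1 / √y < 1 / √x := one_div_lt_one_div_of_lt (sqrt_pos.2 hx) hsqrt
  exact mul_lt_mul_of_pos_left (by linarith) hσ

theorem phiMap_sq_eq {σ x : ℝ} (hx : 0 < x) : phiMap σ x ^ 2 = (σ * x - σ) ^ 2 / x := by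
  have hsqrt : √x ^ 2 = x := sq_sqrt hx.le
  have : √x ≠ 0 := (sqrt_pos.2 hx).ne'
  rw [phiMap]
  field_simp
  rw [hsqrt]
  ring

theorem sqrt_one_add_sq_add_pos (t : ℝ) : 0 < √(1 + t ^ 2) + t := by
  have : |t| < √(1 + t ^ 2) := (lt_sqrt (abs_nonneg t)).2 (by rw [sq_abs]; linarith)
  linarith [neg_abs_le t]

-- `1 / (√(1 + t²) + t) = √(1 + t²) - t`; the point `(√(1 + t²) + t)²` is `phiInv σ (2σt)`.
theorem phiMap_sqrt_one_add_sq_add_sq (σ t : ℝ) :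
    phiMap σ ((√(1 + t ^ 2) + t) ^ 2) = 2 * σ * t := by
  have hpos := sqrt_one_add_sq_add_pos t
  have hs : √(1 + t ^ 2) ^ 2 = 1 + t ^ 2 := sq_sqrt (by positivity)
  rw [phiMap, sqrt_sq hpos.le]
  field_simp
  linear_combination σ * hs

theorem phiMap_image_Ioi {σ : ℝ} (hσ : 0 < σ) : phiMap σ '' Ioi 0 = univ := by
  refine eq_univ_of_forall fun z => ⟨(√(1 + (z / (2 * σ)) ^ 2) + z / (2 * σ)) ^ 2,
    pow_pos (sqrt_one_add_sq_add_pos _) 2, ?_⟩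
  rw [phiMap_sqrt_one_add_sq_add_sq]
  field_simp

theorem hasDerivAt_phiMap (σ : ℝ) {x : ℝ} (hx : 0 < x) :
    HasDerivAt (phiMap σ) (σ * (1 + x) / (2 * x * √x)) x := by
  have hsqrt : 0 < √x := sqrt_pos.2 hx
  have h := ((hasDerivAt_sqrt hx.ne').sub ((hasDerivAt_sqrt hx.ne').inv hsqrt.ne')).const_mul σ
  refine (h.congr_deriv ?_).congr_of_eventuallyEq ?_
  · rw [sq_sqrt hx.le]
    field_simp
    ring
  · filter_upwards with y
    simp [phiMap, one_div]

theorem fIG_mul_one_add_div_two {σ x : ℝ} (hx : 0 < x) :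
    fIG σ σ x * ((1 + x) / 2) = σ * (1 + x) / (2 * x * √x) * stdNormalPdf (phiMap σ x) := by
  have hsqrt : √(2 * π * x ^ 3) = √(2 * π) * (x * √x) := by
    rw [show 2 * π * x ^ 3 = 2 * π * (x ^ 2 * x) by ring, sqrt_mul (by positivity),
      sqrt_mul (sq_nonneg x), sqrt_sq hx.le]
  rw [fIG, stdNormalPdf, phiMap_sq_eq hx, hsqrt]
  have : √x ≠ 0 := (sqrt_pos.2 hx).ne'
  field_simp

/-- Lemma 2, orthogonality: the functions `G_n = He_n ∘ φ_σ` are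
orthogonal with respect to the weight `f_IG(x|σ,σ)(1+x)/2` on `(0,∞)`, with
`∫ G_n G_m · weight = n!` if `n = m` and `0` otherwise. -/
theorem ig_hermite_orthogonality (σ : ℝ) (hσ : 0 < σ) (n m : ℕ) :
    ∫ x in Set.Ioi (0 : ℝ),
        Polynomial.aeval (phiMap σ x) (Polynomial.hermite n) *
          Polynomial.aeval (phiMap σ x) (Polynomial.hermite m) *
          fIG σ σ x * ((1 + x) / 2) =
      if n = m then (Nat.factorial n : ℝ) else 0 := by
  have hchange := integral_image_eq_integral_abs_deriv_smul measurableSet_Ioi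
    (fun x hx => (hasDerivAt_phiMap σ (mem_Ioi.1 hx)).hasDerivWithinAt)
    (phiMap_strictMonoOn hσ).injOn
    (fun z => aeval z (hermite n) * aeval z (hermite m) * stdNormalPdf z)
  rw [phiMap_image_Ioi hσ, setIntegral_univ, integral_hermite_mul_hermite_mul_stdNormalPdf]
    at hchange
  rw [hchange]
  refine setIntegral_congr_fun measurableSet_Ioi fun x hx => ?_
  have hx : 0 < x := hx
  rw [mul_assoc _ (fIG σ σ x), fIG_mul_one_add_div_two hx, smul_eq_mul, abs_of_pos (by positivity)]
  ring
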